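/- (Theorem Ã, algebraic form.) Let a ∈ ℝ[z₁,…,z_d] satisfy a(1,…,1) = 2^d and a(ε) = 0 for every ε ∈ Z'. Then there exist polynomials c_Θ ∈ ℝ[z₁,…,z_d], indexed by the finitely many d×d integer matrices Θ whose columns are 0-1 vectors with exactly one or two entries equal to 1 and with det Θ = ±1, such that a = Σ_Θ c_Θ · 2^d · q̃_Θ and Σ_Θ c_Θ(1,…,1) = 1. -/

import Mathlib

/-!
Let `I` be the ideal spanned by the `2^d q̃_Θ`. The identity matrix contributes
`∏_c (1 + z_c)`, which equals `2^d` at `(1,…,1)` and vanishes on `Z'`, so `a - ∏_c (1 + z_c)`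
vanishes on `{-1,1}^d` and, by the combinatorial Nullstellensatz, lies in the ideal generated
by the `z_j² - 1`. It remains to show `z_j² - 1 ∈ I`. Work with the ideals `I_V` spanned by
the partial products over the columns in `V` of those `Θ` that agree with the identity outside
`V × V`. Replacing a column `e_u` (`u ∉ W`) by `e_u + e_t` (`t ∈ W`) adds row `u` of `Θ`,
which is `e_u`, to row `t`, so it keeps `det Θ`; hence `I_{W ∪ {u}}` contains both
`(1 + z_u) I_W` and `(z_u + z_t) I_W`. Together with `(1 + z_t) I_{V \ {t}} ⊆ I_V` and
`(1 + z_t) + (1 + z_u) - (z_u + z_t) = 2` this gives `z_j² - 1 ∈ I_V` by induction on `V`.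
Evaluating at `(1,…,1)`, where every `q̃_Θ` equals `1`, yields the normalisation.
-/

open MvPolynomial

/-- For a `d×d` integer matrix `Θ` each of whose columns is a 0-1 vector with exactly one
or two entries equal to 1, the modified polynomial `q̃_Θ(z) = ∏_{columns θ} r̃_θ(z)`, where
`r̃_θ(z) = (1+z_k)/2` if `θ = e_k` and `r̃_θ(z) = (z_j+z_k)/2` if `θ = e_j + e_k`, `j ≠ k`. -/
noncomputable def qtilde {d : ℕ} (Θ : Matrix (Fin d) (Fin d) ℤ) : MvPolynomial (Fin d) ℝ :=
  ∏ c : Fin d,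
    (C (1 / 2 : ℝ) *
      ((if (∑ i, Θ i c) = 1 then 1 else 0) + ∑ i : Fin d, C ((Θ i c : ℝ)) * X i))

theorem MvPolynomial.mem_ideal_of_eval_eq_zero_on_cube {σ R : Type*} [Finite σ] [CommRing R]
    [IsDomain R] [NeZero (2 : R)] {I : Ideal (MvPolynomial σ R)} (hI : ∀ i, X i ^ 2 - 1 ∈ I)
    {p : MvPolynomial σ R} (hp : ∀ ε : σ → R, (∀ i, ε i = -1 ∨ ε i = 1) → eval ε p = 0) :
    p ∈ I := by
  classical
  obtain ⟨h, -, rfl⟩ := combinatorial_nullstellensatz_exists_linearCombination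
    (fun _ => {-1, 1}) (fun _ => Finset.insert_nonempty _ _) p
    (fun ε hε => hp ε fun i => by simpa using hε i)
  have hne : (-1 : R) ∉ ({1} : Finset R) := by
    simpa using fun h : (-1 : R) = 1 => (two_ne_zero : (2 : R) ≠ 0) (by linear_combination -h)
  rw [Finsupp.linearCombination_apply]
  refine Ideal.sum_mem _ fun i _ => Ideal.mul_mem_left _ _ ?_
  simpa [Finset.prod_insert hne, ← sq_sub_sq] using hI i

namespace QTildeSpan

variable {d : ℕ}

def Admissible (Θ : Matrix (Fin d) (Fin d) ℤ) : Prop :=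
  (∀ i j, Θ i j = 0 ∨ Θ i j = 1) ∧
  (∀ j, (∑ i, Θ i j) = 1 ∨ (∑ i, Θ i j) = 2) ∧
  (Θ.det = 1 ∨ Θ.det = -1)

theorem setOf_admissible_finite (d : ℕ) :
    {Θ : Matrix (Fin d) (Fin d) ℤ | Admissible Θ}.Finite :=
  (Set.Finite.pi fun _ => Set.Finite.pi fun _ => Set.toFinite {0, 1}).subset
    fun _ hΘ i _ j _ => hΘ.1 i j

noncomputable def admissibleSet (d : ℕ) : Finset (Matrix (Fin d) (Fin d) ℤ) :=
  (setOf_admissible_finite d).toFinset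

theorem mem_admissibleSet {Θ : Matrix (Fin d) (Fin d) ℤ} :
    Θ ∈ admissibleSet d ↔ Admissible Θ :=
  Set.Finite.mem_toFinset _

theorem admissible_one : Admissible (1 : Matrix (Fin d) (Fin d) ℤ) := by
  refine ⟨fun i j => ?_, fun j => Or.inl ?_, Or.inl Matrix.det_one⟩
  · rw [Matrix.one_apply]; split_ifs <;> simp
  · simp [Matrix.one_apply]

/-- `colFactor θ = 2 r̃_θ`. -/
noncomputable def colFactor (θ : Fin d → ℤ) : MvPolynomial (Fin d) ℝ :=
  (if ∑ i, θ i = 1 then 1 else 0) + ∑ i, C (θ i : ℝ) * X i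

theorem two_pow_mul_qtilde (Θ : Matrix (Fin d) (Fin d) ℤ) :
    2 ^ d * qtilde Θ = ∏ c, colFactor fun i => Θ i c := by
  rw [qtilde, Finset.prod_mul_distrib, Finset.prod_const, Finset.card_univ, Fintype.card_fin,
    ← mul_assoc, ← mul_pow, ← map_ofNat C 2, ← C_mul]
  norm_num
  rfl

theorem eval_one_qtilde {Θ : Matrix (Fin d) (Fin d) ℤ} (hΘ : Admissible Θ) :
    eval (fun _ => 1) (qtilde Θ) = 1 := by
  refine (eval_prod _ _ _).trans (Finset.prod_eq_one fun c _ => ?_)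
  have hsum : ∑ i, (Θ i c : ℝ) = ((∑ i, Θ i c : ℤ) : ℝ) := by push_cast; rfl
  rcases hΘ.2.1 c with h | h <;> norm_num [hsum, h]

theorem colFactor_single (u : Fin d) : colFactor (Pi.single u 1) = 1 + X u := by
  simp [colFactor, Pi.single_apply]

theorem colFactor_single_add_single (u t : Fin d) :
    colFactor (Pi.single u 1 + Pi.single t 1) = X u + X t := by
  simp [colFactor, Pi.single_apply, Finset.sum_add_distrib, add_mul]

def EqOneOutside (V : Finset (Fin d)) (Θ : Matrix (Fin d) (Fin d) ℤ) : Prop :=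
  ∀ i c, (i ∉ V ∨ c ∉ V) → Θ i c = (1 : Matrix (Fin d) (Fin d) ℤ) i c

theorem EqOneOutside.mono {V W : Finset (Fin d)} {Θ : Matrix (Fin d) (Fin d) ℤ}
    (h : EqOneOutside W Θ) (hWV : W ⊆ V) : EqOneOutside V Θ :=
  fun i c hic => h i c (hic.imp (fun hi => (hi <| hWV ·)) (fun hc => (hc <| hWV ·)))

theorem EqOneOutside.col_eq_single {V : Finset (Fin d)} {Θ : Matrix (Fin d) (Fin d) ℤ}
    (h : EqOneOutside V Θ) {c : Fin d} (hc : c ∉ V) : (fun i => Θ i c) = Pi.single c 1 := by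
  ext i
  rw [h i c (Or.inr hc), Matrix.one_eq_pi_single, Pi.single_comm]

theorem EqOneOutside.admissible_updateCol {W : Finset (Fin d)} {Θ : Matrix (Fin d) (Fin d) ℤ}
    (h : EqOneOutside W Θ) (hΘ : Admissible Θ) {u t : Fin d} (hu : u ∉ W) (ht : t ∈ W) :
    Admissible (Θ.updateCol u (Pi.single u 1 + Pi.single t 1)) := by
  have hut : u ≠ t := fun h => hu (h ▸ ht)
  refine ⟨fun i c => ?_, fun c => ?_, ?_⟩
  · rcases eq_or_ne c u with rfl | hc
    · simp only [Matrix.updateCol_self, Pi.add_apply, Pi.single_apply]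
      split_ifs <;> simp_all
    · simpa [Matrix.updateCol_ne hc] using hΘ.1 i c
  · rcases eq_or_ne c u with rfl | hc
    · simp [Matrix.updateCol_self, Finset.sum_add_distrib]
    · simpa [Matrix.updateCol_ne hc] using hΘ.2.1 c
  · have hrow : ∀ c, Θ.updateCol u (Pi.single t 1) u c = 0 := fun c => by
      rcases eq_or_ne c u with rfl | hc
      · simp [hut]
      · rw [Matrix.updateCol_ne hc, h u c (Or.inl hu), Matrix.one_apply_ne' hc]
    rw [Matrix.det_updateCol_add, ← h.col_eq_single hu, Matrix.updateCol_eq_self,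
      Matrix.det_eq_zero_of_row_eq_zero u hrow, add_zero]
    exact hΘ.2.2

theorem EqOneOutside.updateCol {W : Finset (Fin d)} {Θ : Matrix (Fin d) (Fin d) ℤ}
    (h : EqOneOutside W Θ) {u t : Fin d} (ht : t ∈ W) :
    EqOneOutside (insert u W) (Θ.updateCol u (Pi.single u 1 + Pi.single t 1)) := by
  intro i c hic
  rcases eq_or_ne c u with rfl | hc
  · have hi : i ∉ insert c W := by simpa using hic
    simp only [Finset.mem_insert, not_or] at hi
    have hit : i ≠ t := fun h => hi.2 (h ▸ ht)
    simp [hi.1, hit, Matrix.one_apply_ne hi.1]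
  · rw [Matrix.updateCol_ne hc]
    exact h.mono (Finset.subset_insert u W) i c hic

noncomputable def localIdeal (V : Finset (Fin d)) : Ideal (MvPolynomial (Fin d) ℝ) :=
  Ideal.span
    {p | ∃ Θ, Admissible Θ ∧ EqOneOutside V Θ ∧ ∏ c ∈ V, colFactor (fun i => Θ i c) = p}

theorem mul_mem_localIdeal {V W : Finset (Fin d)} {f p : MvPolynomial (Fin d) ℝ}
    (hf : ∀ Θ, Admissible Θ → EqOneOutside W Θ →
      f * ∏ c ∈ W, colFactor (fun i => Θ i c) ∈ localIdeal V)
    (hp : p ∈ localIdeal W) : f * p ∈ localIdeal V := by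
  induction hp using Submodule.span_induction with
  | mem x hx => obtain ⟨Θ, hΘ, hW, rfl⟩ := hx; exact hf Θ hΘ hW
  | zero => simp
  | add x y _ _ hx hy => rw [mul_add]; exact add_mem hx hy
  | smul g x _ hx => rw [smul_eq_mul, mul_left_comm]; exact Ideal.mul_mem_left _ _ hx

theorem prod_one_add_X_mem_localIdeal (V : Finset (Fin d)) :
    ∏ c ∈ V, (1 + X c) ∈ localIdeal V :=
  Ideal.subset_span ⟨1, admissible_one, fun i c _ => rfl, Finset.prod_congr rfl fun c _ => by
    rw [← colFactor_single]; congr 1; ext i; rw [Matrix.one_eq_pi_single, Pi.single_comm]⟩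

theorem one_add_X_mul_mem_localIdeal {W : Finset (Fin d)} {u : Fin d} (hu : u ∉ W)
    {p : MvPolynomial (Fin d) ℝ} (hp : p ∈ localIdeal W) :
    (1 + X u) * p ∈ localIdeal (insert u W) :=
  mul_mem_localIdeal (fun Θ hΘ hW => Ideal.subset_span
    ⟨Θ, hΘ, hW.mono (Finset.subset_insert _ _),
      by rw [Finset.prod_insert hu, hW.col_eq_single hu, colFactor_single]⟩) hp

theorem X_add_X_mul_mem_localIdeal {W : Finset (Fin d)} {u t : Fin d} (hu : u ∉ W)
    (ht : t ∈ W) {p : MvPolynomial (Fin d) ℝ} (hp : p ∈ localIdeal W) :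
    (X u + X t) * p ∈ localIdeal (insert u W) := by
  refine mul_mem_localIdeal (fun Θ hΘ hW => Ideal.subset_span
    ⟨_, hW.admissible_updateCol hΘ hu ht, hW.updateCol ht, ?_⟩) hp
  rw [Finset.prod_insert hu]
  congr 1
  · simp only [Matrix.updateCol_self]
    exact colFactor_single_add_single u t
  · exact Finset.prod_congr rfl fun c hc => by
      simp only [Matrix.updateCol_ne fun h : c = u => hu (h ▸ hc)]

theorem sq_sub_one_mem_localIdeal {j : Fin d} (V : Finset (Fin d)) (hj : j ∈ V) :
    X j ^ 2 - 1 ∈ localIdeal V := by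
  induction V using Finset.strongInduction with
  | H V ih =>
  by_cases hV : V = {j}
  · subst hV
    convert Ideal.mul_mem_left _ (X j - 1) (prod_one_add_X_mem_localIdeal {j}) using 1
    rw [Finset.prod_singleton]
    ring
  obtain ⟨u, hu, huj⟩ : ∃ u ∈ V, u ≠ j := by
    by_contra! h
    exact hV (Finset.eq_singleton_iff_unique_mem.2 ⟨hj, h⟩)
  set W := V.erase u
  have hVW : insert u W = V := Finset.insert_erase hu
  have huW : u ∉ W := Finset.notMem_erase u V
  have hjW : j ∈ W := Finset.mem_erase.2 ⟨huj.symm, hj⟩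
  by_cases hW : W = {j}
  · have h1 := one_add_X_mul_mem_localIdeal huW (prod_one_add_X_mem_localIdeal W)
    have h2 := X_add_X_mul_mem_localIdeal huW hjW (prod_one_add_X_mem_localIdeal W)
    rw [hVW, hW, Finset.prod_singleton] at h1 h2
    convert sub_mem h2 h1 using 1
    ring
  obtain ⟨t, ht, htj⟩ : ∃ t ∈ W, t ≠ j := by
    by_contra! h
    exact hW (Finset.eq_singleton_iff_unique_mem.2 ⟨hjW, h⟩)
  have htV : t ∈ V := Finset.mem_of_mem_erase ht
  have hqW := ih W (Finset.erase_ssubset hu) hjW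
  have hqT := ih (V.erase t) (Finset.erase_ssubset htV) (Finset.mem_erase.2 ⟨htj.symm, hj⟩)
  have h1 := one_add_X_mul_mem_localIdeal (Finset.notMem_erase t V) hqT
  have h2 := one_add_X_mul_mem_localIdeal huW hqW
  have h3 := X_add_X_mul_mem_localIdeal huW ht hqW
  rw [Finset.insert_erase htV] at h1
  rw [hVW] at h2 h3
  have hC : (C 2⁻¹ : MvPolynomial (Fin d) ℝ) * 2 = 1 := by
    rw [← map_ofNat C 2, ← C_mul, inv_mul_cancel₀ two_ne_zero, C_1]
  -- `(1 + X t) + (1 + X u) - (X u + X t) = 2`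
  convert Ideal.mul_mem_left _ (C 2⁻¹) (sub_mem (add_mem h1 h2) h3) using 1
  linear_combination (-(X j ^ 2 - 1 : MvPolynomial (Fin d) ℝ)) * hC

theorem exists_eq_sum_of_mem_localIdeal_univ {p : MvPolynomial (Fin d) ℝ}
    (hp : p ∈ localIdeal Finset.univ) :
    ∃ c : Matrix (Fin d) (Fin d) ℤ → MvPolynomial (Fin d) ℝ,
      p = ∑ Θ ∈ admissibleSet d, c Θ * 2 ^ d * qtilde Θ := by
  have hgen : {p | ∃ Θ, Admissible Θ ∧ EqOneOutside Finset.univ Θ ∧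
      ∏ c ∈ Finset.univ, colFactor (fun i => Θ i c) = p} =
      (fun Θ => 2 ^ d * qtilde Θ) '' (admissibleSet d : Set (Matrix (Fin d) (Fin d) ℤ)) := by
    ext p
    simp [EqOneOutside, mem_admissibleSet, two_pow_mul_qtilde]
  rw [localIdeal, hgen] at hp
  obtain ⟨c, hc⟩ := (Submodule.mem_span_image_finset_iff_exists_fun' _).1 hp
  exact ⟨c, by simp_rw [← hc, smul_eq_mul, mul_assoc]⟩

theorem eval_one_sum_mul_two_pow_mul_qtilde
    (c : Matrix (Fin d) (Fin d) ℤ → MvPolynomial (Fin d) ℝ) :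
    eval (fun _ => 1) (∑ Θ ∈ admissibleSet d, c Θ * 2 ^ d * qtilde Θ) =
      2 ^ d * ∑ Θ ∈ admissibleSet d, eval (fun _ => 1) (c Θ) := by
  rw [map_sum, Finset.mul_sum]
  refine Finset.sum_congr rfl fun Θ hΘ => ?_
  simp [eval_one_qtilde (mem_admissibleSet.1 hΘ), mul_comm]

theorem eval_prod_one_add_X {ε : Fin d → ℝ} (hε : ∀ i, ε i = -1 ∨ ε i = 1) :
    eval ε (∏ c, (1 + X c)) = if ε = fun _ => 1 then 2 ^ d else 0 := by
  split_ifs with h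
  · simp [h]; norm_num
  · obtain ⟨i, hi⟩ : ∃ i, ε i = -1 := by
      by_contra! h'
      exact h (funext fun i => (hε i).resolve_left (h' i))
    simp [Finset.prod_eq_zero (Finset.mem_univ i), hi]

end QTildeSpan

theorem stmt_9_general (d : ℕ) (a : MvPolynomial (Fin d) ℝ)
    (h1 : eval (fun _ => (1 : ℝ)) a = 2 ^ d)
    (h0 : ∀ ε : Fin d → ℝ, (∀ i, ε i = -1 ∨ ε i = 1) → ε ≠ (fun _ => 1) →
      eval ε a = 0) :
    ∃ (S : Finset (Matrix (Fin d) (Fin d) ℤ))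
      (c : Matrix (Fin d) (Fin d) ℤ → MvPolynomial (Fin d) ℝ),
      (∀ Θ, Θ ∈ S ↔
        ((∀ i j, Θ i j = 0 ∨ Θ i j = 1) ∧
         (∀ j, (∑ i, Θ i j) = 1 ∨ (∑ i, Θ i j) = 2) ∧
         (Θ.det = 1 ∨ Θ.det = -1))) ∧
      a = ∑ Θ ∈ S, c Θ * (2 : MvPolynomial (Fin d) ℝ) ^ d * qtilde Θ ∧
      (∑ Θ ∈ S, eval (fun _ => (1 : ℝ)) (c Θ)) = 1 := by
  have hcube : a - ∏ c, (1 + X c) ∈ QTildeSpan.localIdeal Finset.univ := by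
    refine mem_ideal_of_eval_eq_zero_on_cube
      (fun j => QTildeSpan.sq_sub_one_mem_localIdeal _ (Finset.mem_univ j)) fun ε hε => ?_
    rw [map_sub, QTildeSpan.eval_prod_one_add_X hε]
    split_ifs with hε1
    · rw [hε1, h1, sub_self]
    · rw [h0 ε hε hε1, sub_zero]
  obtain ⟨c, hc⟩ := QTildeSpan.exists_eq_sum_of_mem_localIdeal_univ
    (sub_add_cancel a _ ▸ add_mem hcube (QTildeSpan.prod_one_add_X_mem_localIdeal _))
  refine ⟨QTildeSpan.admissibleSet d, c, fun Θ => QTildeSpan.mem_admissibleSet, hc, ?_⟩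
  rw [hc, QTildeSpan.eval_one_sum_mul_two_pow_mul_qtilde] at h1
  exact (mul_eq_left₀ (by positivity)).1 h1

/-- Theorem Ã (algebraic form): if `a(1,…,1) = 2^d` and `a(ε) = 0` for all
`ε ∈ Z' = {−1,1}^d \ {(1,…,1)}`, then `a = Σ_Θ c_Θ · 2^d · q̃_Θ` with
`Σ_Θ c_Θ(1,…,1) = 1`, the (finite) index set consisting of all `d×d` integer matrices `Θ`
whose columns are 0-1 vectors with exactly one or two ones and with `det Θ = ±1`. -/
theorem stmt_9 (d : ℕ) (hd : 1 ≤ d) (a : MvPolynomial (Fin d) ℝ)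
    (h1 : eval (fun _ => (1 : ℝ)) a = 2 ^ d)
    (h0 : ∀ ε : Fin d → ℝ, (∀ i, ε i = -1 ∨ ε i = 1) → ε ≠ (fun _ => 1) →
      eval ε a = 0) :
    ∃ (S : Finset (Matrix (Fin d) (Fin d) ℤ))
      (c : Matrix (Fin d) (Fin d) ℤ → MvPolynomial (Fin d) ℝ),
      (∀ Θ, Θ ∈ S ↔
        ((∀ i j, Θ i j = 0 ∨ Θ i j = 1) ∧
         (∀ j, (∑ i, Θ i j) = 1 ∨ (∑ i, Θ i j) = 2) ∧
         (Θ.det = 1 ∨ Θ.det = -1))) ∧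
      a = ∑ Θ ∈ S, c Θ * (2 : MvPolynomial (Fin d) ℝ) ^ d * qtilde Θ ∧
      (∑ Θ ∈ S, eval (fun _ => (1 : ℝ)) (c Θ)) = 1 :=
  stmt_9_general d a h1 h0
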